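/- arXiv:2210.12434 — 6 statements merged into one kernel-verified Lean document; each statement's English description precedes it below -/
import Mathlib

section
/- Let φ : ℝ → ℝ² be a ℤ-periodic Lipschitz function with Lipschitz constant L, let b ≥ 2 be an integer and 0 < λ < 1 with bλ > 1, and set γ = 1/(bλ). Define W(x) = Σ_{n=0}^∞ λ^n φ(b^n x). Then for every integer n ≥ 1, every k ∈ {0,…,b^n−1} and every j ∈ {0,…,b−1}, one has |(W((kb+j)/b^{n+1}) − W(k/b^n))/λ^n − (φ(j/b) − φ(0))| ≤ Lγ/(1−γ). -/
/-!
Let `x₀ = k / bⁿ` and `x₁ = (kb + j) / bⁿ⁺¹`. For `m > n` both `bᵐ x₀` and `bᵐ x₁` are integers,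
so by periodicity the two series for `W` have the same tail and `W x₁ - W x₀` is a finite sum.
Its `n`-th term is `λⁿ (φ (j / b) - φ 0)`, and since `|x₁ - x₀| ≤ b⁻ⁿ` the Lipschitz bound makes
the `m`-th term, `m < n`, at most `L b⁻ⁿ (bλ)ᵐ`. Summing this geometric progression gives
`L λⁿ / (bλ - 1) = λⁿ L γ / (1 - γ)`.
-/

open Finset Function

variable {E : Type*} [NormedAddCommGroup E]

noncomputable def weierstrassFn [NormedSpace ℝ E] (φ : ℝ → E) (lam b x : ℝ) : E :=
  ∑' m : ℕ, lam ^ m • φ (b ^ m * x)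

section Lipschitz

variable {φ : ℝ → E} {L : ℝ}

lemma nonneg_of_norm_sub_le_mul_abs (hLip : ∀ x y : ℝ, ‖φ x - φ y‖ ≤ L * |x - y|) : 0 ≤ L := by
  simpa using (norm_nonneg _).trans (hLip 1 0)

lemma Function.Periodic.norm_le_of_norm_sub_le_mul_abs (hper : Periodic φ 1)
    (hLip : ∀ x y : ℝ, ‖φ x - φ y‖ ≤ L * |x - y|) (x : ℝ) : ‖φ x‖ ≤ ‖φ 0‖ + L := by
  have hfract : φ x = φ (Int.fract x) := by
    simpa [Int.fract_add_floor] using hper.int_mul ⌊x⌋ (Int.fract x)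
  have hdist : |Int.fract x - 0| ≤ 1 := by
    rw [sub_zero, abs_of_nonneg (Int.fract_nonneg x)]
    exact (Int.fract_lt_one x).le
  calc ‖φ x‖ ≤ ‖φ 0‖ + ‖φ (Int.fract x) - φ 0‖ := hfract ▸ norm_le_norm_add_norm_sub' _ _
    _ ≤ ‖φ 0‖ + L * 1 := by
      gcongr
      exact (hLip _ _).trans (mul_le_mul_of_nonneg_left hdist (nonneg_of_norm_sub_le_mul_abs hLip))
    _ = ‖φ 0‖ + L := by rw [mul_one]

lemma Function.Periodic.summable_weierstrassFn_terms [NormedSpace ℝ E] [CompleteSpace E]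
    (hper : Periodic φ 1) (hLip : ∀ x y : ℝ, ‖φ x - φ y‖ ≤ L * |x - y|) {lam : ℝ}
    (hlam0 : 0 ≤ lam) (hlam1 : lam < 1)
    (b x : ℝ) : Summable fun m : ℕ => lam ^ m • φ (b ^ m * x) := by
  refine .of_norm_bounded ((summable_geometric_of_lt_one hlam0 hlam1).mul_left (‖φ 0‖ + L))
    fun m => ?_
  rw [norm_smul, norm_pow, Real.norm_of_nonneg hlam0, mul_comm]
  exact mul_le_mul_of_nonneg_right (hper.norm_le_of_norm_sub_le_mul_abs hLip _) (by positivity)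

lemma norm_sum_range_pow_smul_sub_le [NormedSpace ℝ E] (hLip : ∀ x y : ℝ, ‖φ x - φ y‖ ≤ L * |x - y|)
    {lam b x y : ℝ} {n : ℕ} (hb : 0 < b) (hlam : 0 < lam) (hblam : 1 < b * lam)
    (hxy : |x - y| ≤ (b ^ n)⁻¹) :
    ‖∑ m ∈ range n, lam ^ m • (φ (b ^ m * x) - φ (b ^ m * y))‖ ≤ L * lam ^ n / (b * lam - 1) := by
  have hL := nonneg_of_norm_sub_le_mul_abs hLip
  have hterm (m : ℕ) :
      ‖lam ^ m • (φ (b ^ m * x) - φ (b ^ m * y))‖ ≤ L * (b ^ n)⁻¹ * (b * lam) ^ m := by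
    rw [norm_smul, norm_pow, Real.norm_of_nonneg hlam.le]
    calc lam ^ m * ‖φ (b ^ m * x) - φ (b ^ m * y)‖ ≤ lam ^ m * (L * (b ^ m * |x - y|)) := by
          have hscale : |b ^ m * x - b ^ m * y| = b ^ m * |x - y| := by
            rw [← mul_sub, abs_mul, abs_of_pos (pow_pos hb m)]
          gcongr
          exact (hLip _ _).trans_eq (by rw [hscale])
      _ ≤ lam ^ m * (L * (b ^ m * (b ^ n)⁻¹)) := by gcongr
      _ = L * (b ^ n)⁻¹ * (b * lam) ^ m := by ring
  have hgeom : ∑ m ∈ range n, (b * lam) ^ m ≤ (b * lam) ^ n / (b * lam - 1) := by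
    rw [geom_sum_eq hblam.ne']
    gcongr
    linarith
  calc _ ≤ ∑ m ∈ range n, L * (b ^ n)⁻¹ * (b * lam) ^ m := norm_sum_le_of_le _ fun m _ => hterm m
    _ = L * (b ^ n)⁻¹ * ∑ m ∈ range n, (b * lam) ^ m := (mul_sum _ _ _).symm
    _ ≤ L * (b ^ n)⁻¹ * ((b * lam) ^ n / (b * lam - 1)) := by gcongr
    _ = L * lam ^ n / (b * lam - 1) := by field_simp; ring

end Lipschitz

section BaseExpansion

variable {b : ℕ}

lemma pow_mul_natCast_div_pow_of_le (hb : (b : ℝ) ≠ 0) (k : ℕ) {m n : ℕ} (hnm : n ≤ m) :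
    (b : ℝ) ^ m * (k / (b : ℝ) ^ n) = ((k * b ^ (m - n) : ℕ) : ℝ) := by
  obtain ⟨i, rfl⟩ := Nat.exists_eq_add_of_le hnm
  rw [Nat.add_sub_cancel_left, pow_add]
  push_cast
  field_simp

lemma pow_mul_natCast_div_pow_succ (hb : (b : ℝ) ≠ 0) (n k j : ℕ) :
    (b : ℝ) ^ n * (((k * b + j : ℕ) : ℝ) / (b : ℝ) ^ (n + 1)) = (j : ℝ) / b + (k : ℤ) := by
  rw [pow_succ]
  push_cast
  field_simp
  ring

lemma abs_natCast_div_pow_succ_sub_le {j : ℕ} (hj : j < b) (n k : ℕ) :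
    |((k * b + j : ℕ) : ℝ) / (b : ℝ) ^ (n + 1) - (k : ℝ) / (b : ℝ) ^ n| ≤ ((b : ℝ) ^ n)⁻¹ := by
  have hb : (0 : ℝ) < b := by exact_mod_cast (Nat.zero_le j).trans_lt hj
  have hjb : (j : ℝ) ≤ b := by exact_mod_cast hj.le
  have hdiff : ((k * b + j : ℕ) : ℝ) / (b : ℝ) ^ (n + 1) - (k : ℝ) / (b : ℝ) ^ n
      = (j : ℝ) / b * ((b : ℝ) ^ n)⁻¹ := by
    rw [pow_succ]
    push_cast
    field_simp
    ring
  rw [hdiff, abs_of_nonneg (by positivity)]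
  exact mul_le_of_le_one_left (by positivity) ((div_le_one hb).mpr hjb)

end BaseExpansion

lemma tsum_sub_tsum_eq_sum_range {G : Type*} [AddCommGroup G] [TopologicalSpace G]
    [IsTopologicalAddGroup G] [T2Space G] {f g : ℕ → G} (hf : Summable f) (hg : Summable g)
    {N : ℕ} (hfg : ∀ m, N ≤ m → f m = g m) :
    ∑' m, f m - ∑' m, g m = ∑ m ∈ range N, (f m - g m) := by
  rw [← hf.sum_add_tsum_nat_add N, ← hg.sum_add_tsum_nat_add N, sum_sub_distrib]
  simp only [hfg _ (Nat.le_add_left N _), add_sub_add_right_eq_sub]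

lemma Function.Periodic.weierstrassFn_sub_eq [NormedSpace ℝ E] {φ : ℝ → E} (hper : Periodic φ 1)
    {lam : ℝ} {b : ℕ} (hb : (b : ℝ) ≠ 0)
    (hsum : ∀ x, Summable fun m : ℕ => lam ^ m • φ ((b : ℝ) ^ m * x)) (n k j : ℕ) :
    weierstrassFn φ lam b (((k * b + j : ℕ) : ℝ) / (b : ℝ) ^ (n + 1))
        - weierstrassFn φ lam b ((k : ℝ) / (b : ℝ) ^ n)
      = ∑ m ∈ range n, lam ^ m • (φ ((b : ℝ) ^ m * (((k * b + j : ℕ) : ℝ) / (b : ℝ) ^ (n + 1)))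
          - φ ((b : ℝ) ^ m * ((k : ℝ) / (b : ℝ) ^ n)))
        + lam ^ n • (φ ((j : ℝ) / b) - φ 0) := by
  have hnat (N : ℕ) : φ N = φ 0 := by simpa using hper.nat_mul_eq N
  have htail (m : ℕ) (hm : n + 1 ≤ m) :
      lam ^ m • φ ((b : ℝ) ^ m * (((k * b + j : ℕ) : ℝ) / (b : ℝ) ^ (n + 1)))
        = lam ^ m • φ ((b : ℝ) ^ m * ((k : ℝ) / (b : ℝ) ^ n)) := by
    rw [pow_mul_natCast_div_pow_of_le hb _ hm, pow_mul_natCast_div_pow_of_le hb _ (by omega),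
      hnat, hnat]
  have hlast : φ ((b : ℝ) ^ n * (((k * b + j : ℕ) : ℝ) / (b : ℝ) ^ (n + 1))) = φ ((j : ℝ) / b) := by
    rw [pow_mul_natCast_div_pow_succ hb]
    simpa using hper.int_mul k ((j : ℝ) / b)
  unfold weierstrassFn
  rw [tsum_sub_tsum_eq_sum_range (hsum _) (hsum _) htail, sum_range_succ, ← smul_sub, hlast,
    pow_mul_natCast_div_pow_of_le hb k le_rfl, hnat]
  simp only [smul_sub]

theorem stmt0_general (φ : ℝ → EuclideanSpace ℝ (Fin 2)) (L : ℝ)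
    (hper : ∀ x : ℝ, φ (x + 1) = φ x)
    (hLip : ∀ x y : ℝ, ‖φ x - φ y‖ ≤ L * |x - y|)
    (b : ℕ) (lam : ℝ) (hlam1 : lam < 1)
    (hblam : 1 < (b : ℝ) * lam)
    (γ : ℝ) (hγ : γ = 1 / ((b : ℝ) * lam))
    (W : ℝ → EuclideanSpace ℝ (Fin 2))
    (hW : ∀ x : ℝ, W x = ∑' m : ℕ, lam ^ m • φ ((b : ℝ) ^ m * x)) :
    ∀ n : ℕ, 1 ≤ n → ∀ k : ℕ, k < b ^ n → ∀ j : ℕ, j < b →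
      ‖(lam ^ n)⁻¹ • (W (((k * b + j : ℕ) : ℝ) / (b : ℝ) ^ (n + 1)) - W ((k : ℝ) / (b : ℝ) ^ n))
          - (φ ((j : ℝ) / (b : ℝ)) - φ 0)‖ ≤ L * γ / (1 - γ) := by
  intro n _ k _ j hj
  have hlam0 : 0 < lam := pos_of_mul_pos_right (one_pos.trans hblam) (Nat.cast_nonneg b)
  have hb : (0 : ℝ) < b := pos_of_mul_pos_left (one_pos.trans hblam) hlam0.le
  have hper : Periodic φ 1 := hper
  obtain rfl : W = weierstrassFn φ lam b := funext hW
  have hlamn : lam ^ n ≠ 0 := pow_ne_zero n hlam0.ne'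
  have hsum := hper.summable_weierstrassFn_terms hLip hlam0.le hlam1 b
  rw [hper.weierstrassFn_sub_eq hb.ne' hsum n k j,
    smul_add, smul_smul, inv_mul_cancel₀ hlamn, one_smul, add_sub_cancel_right, norm_smul,
    norm_inv, norm_pow, Real.norm_of_nonneg hlam0.le]
  calc (lam ^ n)⁻¹ * ‖_‖ ≤ (lam ^ n)⁻¹ * (L * lam ^ n / (b * lam - 1)) := by
        gcongr
        exact norm_sum_range_pow_smul_sub_le hLip hb hlam0 hblam
          (abs_natCast_div_pow_succ_sub_le hj n k)
    _ = L * γ / (1 - γ) := by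
        have : (b : ℝ) * lam - 1 ≠ 0 := by linarith
        rw [hγ]
        field_simp

/-- For a ℤ-periodic Lipschitz `φ : ℝ → ℝ²` with constant `L`,
`b ≥ 2`, `0 < λ < 1`, `bλ > 1`, `γ = 1/(bλ)`, and `W(x) = ∑ λ^n φ(b^n x)`:
`|(W((kb+j)/b^(n+1)) − W(k/b^n))/λ^n − (φ(j/b) − φ(0))| ≤ Lγ/(1−γ)`. -/
theorem stmt0 (φ : ℝ → EuclideanSpace ℝ (Fin 2)) (L : ℝ)
    (hper : ∀ x : ℝ, φ (x + 1) = φ x)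
    (hLip : ∀ x y : ℝ, ‖φ x - φ y‖ ≤ L * |x - y|)
    (b : ℕ) (hb : 2 ≤ b) (lam : ℝ) (hlam0 : 0 < lam) (hlam1 : lam < 1)
    (hblam : 1 < (b : ℝ) * lam)
    (γ : ℝ) (hγ : γ = 1 / ((b : ℝ) * lam))
    (W : ℝ → EuclideanSpace ℝ (Fin 2))
    (hW : ∀ x : ℝ, W x = ∑' m : ℕ, lam ^ m • φ ((b : ℝ) ^ m * x)) :
    ∀ n : ℕ, 1 ≤ n → ∀ k : ℕ, k < b ^ n → ∀ j : ℕ, j < b →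
      ‖(lam ^ n)⁻¹ • (W (((k * b + j : ℕ) : ℝ) / (b : ℝ) ^ (n + 1)) - W ((k : ℝ) / (b : ℝ) ^ n))
          - (φ ((j : ℝ) / (b : ℝ)) - φ 0)‖ ≤ L * γ / (1 - γ) :=
  stmt0_general φ L hper hLip b lam hlam1 hblam γ hγ W hW
end

section
/- Let φ : ℝ → ℝ² be a ℤ-periodic Lipschitz function with Lipschitz constant L, let b ≥ 2 be an integer and 0 < λ < 1 with bλ > 1, and set γ = 1/(bλ). Define W(x) = Σ_{n=0}^∞ λ^n φ(b^n x). Then for every integer n ≥ 1, every k ∈ {0,…,b^n−1} and every j ∈ {0,…,b−1}, one has |(W((kb+j)/b^{n+1}) − W(k/b^n))/λ^n − (φ(j/b) − φ(0)) − λ^{−1}(φ(k/b + j/b²) − φ(k/b))| ≤ Lγ²/(1−γ). -/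
/-!
Only finitely many terms of the series matter: at `x = k / bⁿ` and `x = (kb + j) / bⁿ⁺¹` the
points `bᵐ x` with `m ≥ n + 1` are integers, so the tails of the two series coincide. Of the
remaining terms, the ones of index `n` and `n - 1` are exactly the two explicit differences of the
formula, and by the Lipschitz bound the term of index `m < n - 1`, divided by `λⁿ`, has norm at
most `L λ^(m - n) b^(m - n) = L γ^(n - m)`; these sum to at most `L γ² / (1 - γ)`.
-/

open Finset Function

section Periodic

variable {E : Type*}

theorem Function.Periodic.add_intCast_of_one {φ : ℝ → E} (hper : Periodic φ 1) (y : ℝ)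
    (z : ℤ) : φ (y + z) = φ y := by
  simpa using hper.int_mul z y

theorem Function.Periodic.intCast_of_one {φ : ℝ → E} (hper : Periodic φ 1) (z : ℤ) :
    φ z = φ 0 := by
  simpa using hper.add_intCast_of_one 0 z

end Periodic

section Weierstrass

variable {E : Type*} [NormedAddCommGroup E] [NormedSpace ℝ E]

noncomputable def weierstrass (φ : ℝ → E) (b : ℕ) (lam x : ℝ) : E :=
  ∑' m : ℕ, lam ^ m • φ ((b : ℝ) ^ m * x)

theorem weierstrass_eq_sum_add_tsum {φ : ℝ → E} (hper : Periodic φ 1) {b : ℕ} {lam : ℝ}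
    (hlam : |lam| < 1) {N : ℕ} {x : ℝ} (hx : ∃ z : ℤ, (b : ℝ) ^ N * x = z) :
    weierstrass φ b lam x =
      ∑ m ∈ range N, lam ^ m • φ ((b : ℝ) ^ m * x) + ∑' m : ℕ, lam ^ (m + N) • φ 0 := by
  obtain ⟨z, hz⟩ := hx
  have htail : ∀ m, φ ((b : ℝ) ^ (m + N) * x) = φ 0 := fun m => by
    have hint : (b : ℝ) ^ (m + N) * x = ((b ^ m * z : ℤ) : ℝ) := by
      rw [pow_add, mul_assoc, hz]
      push_cast
      ring
    rw [hint, hper.intCast_of_one]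
  have hsum : Summable fun m : ℕ => lam ^ (m + N) • φ ((b : ℝ) ^ (m + N) * x) := by
    simp only [htail]
    exact ((summable_nat_add_iff N).2 (summable_geometric_of_abs_lt_one hlam)).smul_const _
  rw [weierstrass,
    ← Summable.sum_add_tsum_nat_add' (f := fun m => lam ^ m • φ ((b : ℝ) ^ m * x)) hsum]
  simp only [htail]

theorem weierstrass_sub_eq_sum {φ : ℝ → E} (hper : Periodic φ 1) {b : ℕ} {lam : ℝ}
    (hlam : |lam| < 1) {N : ℕ} {x y : ℝ} (hx : ∃ z : ℤ, (b : ℝ) ^ N * x = z)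
    (hy : ∃ z : ℤ, (b : ℝ) ^ N * y = z) :
    weierstrass φ b lam x - weierstrass φ b lam y =
      ∑ m ∈ range N, lam ^ m • (φ ((b : ℝ) ^ m * x) - φ ((b : ℝ) ^ m * y)) := by
  rw [weierstrass_eq_sum_add_tsum hper hlam hx, weierstrass_eq_sum_add_tsum hper hlam hy,
    add_sub_add_right_eq_sub, ← sum_sub_distrib]
  simp only [smul_sub]

end Weierstrass

theorem inv_pow_smul_sum_range_add_two_sub {K E : Type*} [Field K] [AddCommGroup E]
    [Module K E] {lam : K} (hlam : lam ≠ 0) (v : ℕ → E) (p : ℕ) :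
    (lam ^ (p + 1))⁻¹ • ∑ m ∈ range (p + 2), lam ^ m • v m - v (p + 1) - lam⁻¹ • v p =
      (lam ^ (p + 1))⁻¹ • ∑ m ∈ range p, lam ^ m • v m := by
  have hp : (lam ^ (p + 1))⁻¹ * lam ^ p = lam⁻¹ := by
    rw [pow_succ]
    field_simp
  rw [sum_range_succ, sum_range_succ, smul_add, smul_add, smul_smul, smul_smul, hp,
    inv_mul_cancel₀ (pow_ne_zero _ hlam), one_smul]
  abel

theorem inv_pow_mul_pow_mul_div_pow {lam a : ℝ} (hlam : lam ≠ 0) (ha : a ≠ 0) {m n : ℕ}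
    (hmn : m ≤ n) : (lam ^ n)⁻¹ * lam ^ m * (a ^ m / a ^ n) = (1 / (a * lam)) ^ (n - m) := by
  obtain ⟨d, rfl⟩ := Nat.exists_eq_add_of_le hmn
  rw [Nat.add_sub_cancel_left, pow_add, pow_add, one_div, inv_pow, mul_pow]
  field_simp

theorem sum_range_pow_succ_sub_le {γ : ℝ} (hγ0 : 0 ≤ γ) (hγ1 : γ < 1) (p : ℕ) :
    ∑ m ∈ range p, γ ^ (p + 1 - m) ≤ γ ^ 2 / (1 - γ) := by
  have hreflect := sum_Ico_reflect (fun i => γ ^ i) 0 (show p ≤ p + 1 + 1 by omega)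
  rw [show p + 1 + 1 - p = 2 by omega, Nat.sub_zero] at hreflect
  rw [range_eq_Ico, hreflect]
  exact geom_sum_Ico_le_of_lt_one hγ0 hγ1

theorem norm_inv_pow_smul_sum_le {E : Type*} [SeminormedAddCommGroup E] [NormedSpace ℝ E]
    {lam a C : ℝ} (hlam : 0 < lam) (ha : 0 < a) (hγ : 1 < a * lam) (hC : 0 ≤ C) {p : ℕ}
    {v : ℕ → E} (hv : ∀ m < p, ‖v m‖ ≤ C * (a ^ m / a ^ (p + 1))) :
    ‖(lam ^ (p + 1))⁻¹ • ∑ m ∈ range p, lam ^ m • v m‖ ≤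
      C * (1 / (a * lam)) ^ 2 / (1 - 1 / (a * lam)) := by
  set γ := 1 / (a * lam)
  have hγ0 : 0 ≤ γ := by positivity
  have hγ1 : γ < 1 := by rwa [div_lt_one (by positivity)]
  have hterm : ∀ m ∈ range p, ‖(lam ^ (p + 1))⁻¹ • lam ^ m • v m‖ ≤ C * γ ^ (p + 1 - m) := by
    intro m hm
    have hmp : m ≤ p + 1 := by have := mem_range.1 hm; omega
    rw [norm_smul, norm_smul, Real.norm_of_nonneg (by positivity),
      Real.norm_of_nonneg (by positivity), ← mul_assoc,
      ← inv_pow_mul_pow_mul_div_pow hlam.ne' ha.ne' hmp]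
    calc (lam ^ (p + 1))⁻¹ * lam ^ m * ‖v m‖
        ≤ (lam ^ (p + 1))⁻¹ * lam ^ m * (C * (a ^ m / a ^ (p + 1))) :=
          mul_le_mul_of_nonneg_left (hv m (mem_range.1 hm)) (by positivity)
      _ = C * ((lam ^ (p + 1))⁻¹ * lam ^ m * (a ^ m / a ^ (p + 1))) := by ring
  calc ‖(lam ^ (p + 1))⁻¹ • ∑ m ∈ range p, lam ^ m • v m‖
      ≤ ∑ m ∈ range p, ‖(lam ^ (p + 1))⁻¹ • lam ^ m • v m‖ := by
        rw [smul_sum]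
        exact norm_sum_le _ _
    _ ≤ ∑ m ∈ range p, C * γ ^ (p + 1 - m) := sum_le_sum hterm
    _ = C * ∑ m ∈ range p, γ ^ (p + 1 - m) := (mul_sum _ _ _).symm
    _ ≤ C * (γ ^ 2 / (1 - γ)) :=
        mul_le_mul_of_nonneg_left (sum_range_pow_succ_sub_le hγ0 hγ1 p) hC
    _ = C * γ ^ 2 / (1 - γ) := (mul_div_assoc _ _ _).symm

theorem norm_sub_comp_pow_mul_le {E : Type*} [SeminormedAddCommGroup E] {φ : ℝ → E} {L : ℝ}
    (hLip : ∀ x y : ℝ, ‖φ x - φ y‖ ≤ L * |x - y|) (hL : 0 ≤ L) {b j : ℕ} (hj : j < b)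
    (k m p : ℕ) :
    ‖φ ((b : ℝ) ^ m * (((k * b + j : ℕ) : ℝ) / (b : ℝ) ^ (p + 1 + 1)))
        - φ ((b : ℝ) ^ m * ((k : ℝ) / (b : ℝ) ^ (p + 1)))‖ ≤
      L * ((b : ℝ) ^ m / (b : ℝ) ^ (p + 1)) := by
  have hb0 : (0 : ℝ) < b := by exact_mod_cast Nat.zero_lt_of_lt hj
  have hjb : (j : ℝ) / b ≤ 1 := (div_le_one hb0).2 (by exact_mod_cast hj.le)
  refine (hLip _ _).trans (mul_le_mul_of_nonneg_left ?_ hL)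
  rw [show (b : ℝ) ^ m * (((k * b + j : ℕ) : ℝ) / (b : ℝ) ^ (p + 1 + 1))
      - (b : ℝ) ^ m * ((k : ℝ) / (b : ℝ) ^ (p + 1)) = (b : ℝ) ^ m / (b : ℝ) ^ (p + 1) * (j / b) by
    push_cast; field_simp; ring, abs_of_nonneg (by positivity)]
  exact mul_le_of_le_one_right (by positivity) hjb

theorem stmt1_general (φ : ℝ → EuclideanSpace ℝ (Fin 2)) (L : ℝ)
    (hper : ∀ x : ℝ, φ (x + 1) = φ x)
    (hLip : ∀ x y : ℝ, ‖φ x - φ y‖ ≤ L * |x - y|)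
    (b : ℕ) (lam : ℝ) (hlam0 : 0 < lam) (hlam1 : lam < 1)
    (hblam : 1 < (b : ℝ) * lam)
    (γ : ℝ) (hγ : γ = 1 / ((b : ℝ) * lam))
    (W : ℝ → EuclideanSpace ℝ (Fin 2))
    (hW : ∀ x : ℝ, W x = ∑' m : ℕ, lam ^ m • φ ((b : ℝ) ^ m * x)) :
    ∀ n : ℕ, 1 ≤ n → ∀ k : ℕ, k < b ^ n → ∀ j : ℕ, j < b →
      ‖(lam ^ n)⁻¹ • (W (((k * b + j : ℕ) : ℝ) / (b : ℝ) ^ (n + 1)) - W ((k : ℝ) / (b : ℝ) ^ n))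
          - (φ ((j : ℝ) / (b : ℝ)) - φ 0)
          - lam⁻¹ • (φ ((k : ℝ) / (b : ℝ) + (j : ℝ) / (b : ℝ) ^ 2) - φ ((k : ℝ) / (b : ℝ)))‖
        ≤ L * γ ^ 2 / (1 - γ) := by
  intro n hn k _ j hj
  obtain ⟨p, rfl⟩ := Nat.exists_eq_add_of_le' hn
  obtain rfl : W = weierstrass φ b lam := funext hW
  subst hγ
  have hb0 : (0 : ℝ) < b := by exact_mod_cast Nat.zero_lt_of_lt hj
  have hL : 0 ≤ L := by simpa using (norm_nonneg _).trans (hLip 1 0)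
  set x₁ : ℝ := ((k * b + j : ℕ) : ℝ) / (b : ℝ) ^ (p + 1 + 1)
  set x₀ : ℝ := (k : ℝ) / (b : ℝ) ^ (p + 1)
  have hx₁ : ∃ z : ℤ, (b : ℝ) ^ (p + 1 + 1) * x₁ = z := ⟨k * b + j, by push_cast [x₁]; field_simp⟩
  have hx₀ : ∃ z : ℤ, (b : ℝ) ^ (p + 1 + 1) * x₀ = z := ⟨k * b, by push_cast [x₀]; field_simp; ring⟩
  have htop : φ (j / b) - φ 0 = φ ((b : ℝ) ^ (p + 1) * x₁) - φ ((b : ℝ) ^ (p + 1) * x₀) := by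
    rw [show (b : ℝ) ^ (p + 1) * x₁ = j / b + (k : ℤ) by push_cast [x₁]; field_simp; ring,
      show (b : ℝ) ^ (p + 1) * x₀ = (k : ℤ) by push_cast [x₀]; field_simp,
      Periodic.add_intCast_of_one hper, Periodic.intCast_of_one hper]
  have hnext :
      φ (k / b + j / b ^ 2) - φ (k / b) = φ ((b : ℝ) ^ p * x₁) - φ ((b : ℝ) ^ p * x₀) := by
    rw [show (b : ℝ) ^ p * x₁ = k / b + j / b ^ 2 by push_cast [x₁]; field_simp; ring,
      show (b : ℝ) ^ p * x₀ = k / b by push_cast [x₀]; field_simp; ring]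
  rw [weierstrass_sub_eq_sum hper ((abs_of_pos hlam0).trans_lt hlam1) hx₁ hx₀, htop, hnext,
    inv_pow_smul_sum_range_add_two_sub hlam0.ne']
  exact norm_inv_pow_smul_sum_le hlam0 hb0 hblam hL fun m _ =>
    norm_sub_comp_pow_mul_le hLip hL hj k m p

/-- Second order version of the basic formula:
`|(W((kb+j)/b^(n+1)) − W(k/b^n))/λ^n − (φ(j/b) − φ(0)) − λ⁻¹(φ(k/b + j/b²) − φ(k/b))| ≤ Lγ²/(1−γ)`. -/
theorem stmt1 (φ : ℝ → EuclideanSpace ℝ (Fin 2)) (L : ℝ)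
    (hper : ∀ x : ℝ, φ (x + 1) = φ x)
    (hLip : ∀ x y : ℝ, ‖φ x - φ y‖ ≤ L * |x - y|)
    (b : ℕ) (hb : 2 ≤ b) (lam : ℝ) (hlam0 : 0 < lam) (hlam1 : lam < 1)
    (hblam : 1 < (b : ℝ) * lam)
    (γ : ℝ) (hγ : γ = 1 / ((b : ℝ) * lam))
    (W : ℝ → EuclideanSpace ℝ (Fin 2))
    (hW : ∀ x : ℝ, W x = ∑' m : ℕ, lam ^ m • φ ((b : ℝ) ^ m * x)) :
    ∀ n : ℕ, 1 ≤ n → ∀ k : ℕ, k < b ^ n → ∀ j : ℕ, j < b →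
      ‖(lam ^ n)⁻¹ • (W (((k * b + j : ℕ) : ℝ) / (b : ℝ) ^ (n + 1)) - W ((k : ℝ) / (b : ℝ) ^ n))
          - (φ ((j : ℝ) / (b : ℝ)) - φ 0)
          - lam⁻¹ • (φ ((k : ℝ) / (b : ℝ) + (j : ℝ) / (b : ℝ) ^ 2) - φ ((k : ℝ) / (b : ℝ)))‖
        ≤ L * γ ^ 2 / (1 - γ) :=
  stmt1_general φ L hper hLip b lam hlam0 hlam1 hblam γ hγ W hW
end

section
/- Let φ : ℝ → ℝ² be ℤ-periodic Lipschitz with image φ̂ = {φ(s) : s ∈ ℝ}. Suppose there exists ε > 0 such that the open ball B(0,ε) is contained in a bounded connected component of ℝ² \ φ̂ (i.e., φ̂ separates B(0,ε) from ∞). Then for every λ ∈ (0,1), φ̂ + B(0, ελ) ⊆ ⋃_{s ∈ [0,1)} (φ(s) + λ·φ̂), where A + B denotes the Minkowski sum and λ·φ̂ = {λa : a ∈ φ̂}. -/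
open scoped Pointwise

/-!
Suppose `x = φ(t) + v` with `‖v‖ < ελ` is not covered. Then the loop `ψ(s) = λ⁻¹ (x - φ(s))`
avoids `φ̂` and meets `B(0,ε)`, so it lies in the bounded component `U` of the complement of `φ̂`
containing `0`. Since the boundary of `U` lies in `φ̂`, every linear functional `ℓ ≠ 0` satisfies
`m ≤ ℓ ≤ M` on `U`, where `[m, M] = ℓ(φ̂)`. Evaluating this on `ψ` where `ℓ ∘ φ` attains `m` and
`M` gives `M - m ≤ λ (M - m)`, so `M = m`; together with `m ≤ ℓ 0 ≤ M` this makes `ℓ` vanish on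
`φ̂`, which fails for `ℓ` chosen nonzero at a point of `φ̂`.
-/

open Set Metric Bornology Function

theorem frontier_connectedComponentIn_subset_compl {α : Type*} [TopologicalSpace α]
    [LocallyConnectedSpace α] {F : Set α} (hF : IsOpen F) (x : α) :
    frontier (connectedComponentIn F x) ⊆ Fᶜ := by
  intro z hz hzF
  rw [hF.connectedComponentIn.frontier_eq] at hz
  obtain ⟨w, hwz, hwx⟩ := mem_closure_iff.mp hz.1 _ hF.connectedComponentIn
    (mem_connectedComponentIn hzF)
  have hxz := (connectedComponentIn_eq hwx).trans (connectedComponentIn_eq hwz).symm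
  exact hz.2 (hxz ▸ mem_connectedComponentIn hzF)

section SupportingHalfspaces

variable {E : Type*} [NormedAddCommGroup E] [NormedSpace ℝ E] [ProperSpace E]

theorem IsOpen.exists_mem_frontier_le {U : Set E} (hU : IsOpen U) (hb : IsBounded U)
    {ℓ : StrongDual ℝ E} (hℓ : ℓ ≠ 0) {u : E} (hu : u ∈ U) : ∃ y ∈ frontier U, ℓ u ≤ ℓ y := by
  obtain ⟨y, hy, hmax⟩ := (isCompact_of_isClosed_isBounded isClosed_closure hb.closure
    ).exists_isMaxOn ⟨u, subset_closure hu⟩ ℓ.continuous.continuousOn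
  refine ⟨y, ?_, hmax (subset_closure hu)⟩
  rw [hU.frontier_eq]
  refine ⟨hy, fun hyU => hℓ ?_⟩
  exact ((hmax.on_subset subset_closure).isLocalMax (hU.mem_nhds hyU)).hasFDerivAt_eq_zero
    ℓ.hasFDerivAt

section BoundedComponent

variable {C : Set E} {x : E} {ℓ : StrongDual ℝ E} {c u : E}

theorem IsMaxOn.le_of_mem_connectedComponentIn_compl (hc : IsMaxOn ℓ C c) (hC : IsClosed C)
    (hb : IsBounded (connectedComponentIn Cᶜ x)) (hℓ : ℓ ≠ 0) (hu : u ∈ connectedComponentIn Cᶜ x) :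
    ℓ u ≤ ℓ c := by
  obtain ⟨y, hy, hle⟩ := hC.isOpen_compl.connectedComponentIn.exists_mem_frontier_le hb hℓ hu
  have hyC : y ∈ C :=
    not_not.mp (frontier_connectedComponentIn_subset_compl hC.isOpen_compl x hy)
  exact hle.trans (hc hyC)

theorem IsMinOn.le_of_mem_connectedComponentIn_compl (hc : IsMinOn ℓ C c) (hC : IsClosed C)
    (hb : IsBounded (connectedComponentIn Cᶜ x)) (hℓ : ℓ ≠ 0) (hu : u ∈ connectedComponentIn Cᶜ x) :
    ℓ c ≤ ℓ u := by
  have hneg : IsMaxOn (-ℓ) C c := fun y hy => by simpa using hc hy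
  simpa using hneg.le_of_mem_connectedComponentIn_compl hC hb (neg_ne_zero.mpr hℓ) hu

end BoundedComponent

theorem exists_inv_smul_sub_notMem_connectedComponentIn {C : Set E} (hC : IsCompact C)
    (h0 : (0 : E) ∉ C) (hb : IsBounded (connectedComponentIn Cᶜ 0)) {lam : ℝ} (hlam0 : 0 < lam)
    (hlam1 : lam < 1) {c₀ : E} (hc₀ : c₀ ∈ C) (x : E) :
    ∃ c ∈ C, lam⁻¹ • (x - c) ∉ connectedComponentIn Cᶜ 0 := by
  by_contra! h
  have hc₀ne : c₀ ≠ 0 := ne_of_mem_of_not_mem hc₀ h0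
  obtain ⟨ℓ, -, hℓc₀⟩ := exists_dual_vector ℝ c₀ (norm_ne_zero_iff.mpr hc₀ne)
  have hℓc₀_pos : 0 < ℓ c₀ := hℓc₀ ▸ norm_pos_iff.mpr hc₀ne
  have hℓ : ℓ ≠ 0 := by rintro rfl; simp at hℓc₀_pos
  obtain ⟨cmax, hcmax, hmax⟩ := hC.exists_isMaxOn ⟨c₀, hc₀⟩ ℓ.continuous.continuousOn
  obtain ⟨cmin, hcmin, hmin⟩ := hC.exists_isMinOn ⟨c₀, hc₀⟩ ℓ.continuous.continuousOn
  have hU0 : (0 : E) ∈ connectedComponentIn Cᶜ 0 := mem_connectedComponentIn h0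
  have hm0 := hmin.le_of_mem_connectedComponentIn_compl hC.isClosed hb hℓ hU0
  have hM0 := hmax.le_of_mem_connectedComponentIn_compl hC.isClosed hb hℓ hU0
  have hupper := hmax.le_of_mem_connectedComponentIn_compl hC.isClosed hb hℓ (h cmin hcmin)
  have hlower := hmin.le_of_mem_connectedComponentIn_compl hC.isClosed hb hℓ (h cmax hcmax)
  simp only [map_smul, map_sub, smul_eq_mul, map_zero] at hm0 hM0 hupper hlower
  rw [inv_mul_le_iff₀ hlam0] at hupper
  rw [le_inv_mul_iff₀ hlam0] at hlower
  -- the width of `C` in direction `ℓ` is positive, yet at most `lam` times itself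
  have hwidth : 0 < ℓ cmax - ℓ cmin := by linarith [isMaxOn_iff.mp hmax c₀ hc₀]
  nlinarith

end SupportingHalfspaces

theorem Function.Periodic.add_smul_mem_biUnion_Ico {E : Type*} [AddCommGroup E] [Module ℝ E]
    {φ : ℝ → E} {c : ℝ} (hp : Periodic φ c) (hc : 0 < c) (lam s u : ℝ) :
    φ s + lam • φ u ∈ ⋃ s ∈ Ico (0 : ℝ) c, ({φ s} + lam • range φ) := by
  obtain ⟨s', hs', hs⟩ := hp.exists_mem_Ico₀ hc s
  exact mem_biUnion hs' (hs ▸ add_mem_add rfl (smul_mem_smul_set (mem_range_self u)))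

theorem stmt2_general (φ : ℝ → EuclideanSpace ℝ (Fin 2)) (ε : ℝ)
    (hper : ∀ x : ℝ, φ (x + 1) = φ x)
    (hLip : ∃ K : NNReal, LipschitzWith K φ)
    (hball : Metric.ball (0 : EuclideanSpace ℝ (Fin 2)) ε ⊆ (Set.range φ)ᶜ)
    (hbd : Bornology.IsBounded (connectedComponentIn (Set.range φ)ᶜ 0)) :
    ∀ lam : ℝ, 0 < lam → lam < 1 →
      Set.range φ + Metric.ball (0 : EuclideanSpace ℝ (Fin 2)) (ε * lam) ⊆
        ⋃ s ∈ Set.Ico (0 : ℝ) 1, ({φ s} + lam • Set.range φ) := by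
  intro lam hl0 hl1 x hx
  obtain ⟨_, ⟨t, rfl⟩, v, hv, rfl⟩ := mem_add.mp hx
  have hp : Periodic φ 1 := hper
  have hcont : Continuous φ := hLip.elim fun _ hK => hK.continuous
  set C := range φ
  set ψ : ℝ → EuclideanSpace ℝ (Fin 2) := fun s => lam⁻¹ • (φ t + v - φ s)
  by_contra hcov
  have hψC : range ψ ⊆ Cᶜ := by
    rintro _ ⟨s, rfl⟩ ⟨u, hu⟩
    refine hcov ?_
    have hrepr : φ t + v = φ s + lam • φ u := by
      rw [hu, smul_smul, mul_inv_cancel₀ hl0.ne', one_smul, add_sub_cancel]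
    rw [hrepr]
    exact hp.add_smul_mem_biUnion_Ico one_pos lam s u
  have hψt : ψ t ∈ ball 0 ε := by
    rw [mem_ball_zero_iff, show ψ t = lam⁻¹ • v by simp [ψ], norm_smul, norm_inv,
      Real.norm_of_nonneg hl0.le, inv_mul_lt_iff₀ hl0, mul_comm]
    exact mem_ball_zero_iff.mp hv
  have hε : 0 < ε := nonempty_ball.mp ⟨_, hψt⟩
  have h0 : (0 : EuclideanSpace ℝ (Fin 2)) ∉ C := hball (mem_ball_self hε)
  have hψU : range ψ ⊆ connectedComponentIn Cᶜ 0 :=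
    subset_union_right.trans <| (isPreconnected_ball.union _ hψt (mem_range_self t)
      (isConnected_range (by fun_prop)).isPreconnected).subset_connectedComponentIn
      (mem_union_left _ (mem_ball_self hε)) (union_subset hball hψC)
  obtain ⟨_, ⟨s, rfl⟩, hs⟩ := exists_inv_smul_sub_notMem_connectedComponentIn
    (hp.compact_of_continuous one_ne_zero hcont) h0 hbd hl0 hl1 (mem_range_self 0) (φ t + v)
  exact hs (hψU (mem_range_self s))

/-- If the image `φ̂` of a ℤ-periodic Lipschitz `φ : ℝ → ℝ²` separates
`B(0,ε)` from `∞` (i.e. `B(0,ε)` lies in a bounded connected component of the complement),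
then for every `λ ∈ (0,1)`, `φ̂ + B(0,ελ) ⊆ ⋃_{s∈[0,1)} (φ(s) + λ·φ̂)`. -/
theorem stmt2 (φ : ℝ → EuclideanSpace ℝ (Fin 2)) (ε : ℝ) (hε : 0 < ε)
    (hper : ∀ x : ℝ, φ (x + 1) = φ x)
    (hLip : ∃ K : NNReal, LipschitzWith K φ)
    (hball : Metric.ball (0 : EuclideanSpace ℝ (Fin 2)) ε ⊆ (Set.range φ)ᶜ)
    (hbd : Bornology.IsBounded (connectedComponentIn (Set.range φ)ᶜ 0)) :
    ∀ lam : ℝ, 0 < lam → lam < 1 →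
      Set.range φ + Metric.ball (0 : EuclideanSpace ℝ (Fin 2)) (ε * lam) ⊆
        ⋃ s ∈ Set.Ico (0 : ℝ) 1, ({φ s} + lam • Set.range φ) :=
  stmt2_general φ ε hper hLip hball hbd
end

section
/- Let φ : ℝ → ℝ² be ℤ-periodic Lipschitz with constant L and image φ̂, and suppose φ̂ separates B(0,ε) from ∞ for some ε > 0. Let β ∈ [0,1), let b ≥ 2 be an integer and λ ∈ (0,1) with bλ > L/(Δ(φ)(1−λ)), where Δ(φ) is the oscillation of φ. Define ℓ_β(s) = φ(s) + λ^{−1}(φ(β + s/b) − φ(β)) and let ℓ̂_β be its image over s ∈ [0,1). Then ℓ̂_β + B(0, ελ) ⊆ ⋃_{s ∈ [0,1)} (ℓ_β(s) + λ·φ̂). -/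
/-!
Write `x = ℓ(s₀) + v` with `‖v‖ < ελ` and follow the curve `G(s) = λ⁻¹(x - ℓ(s))`. It starts at
`v/λ`, inside the bounded component `U` of `ℝ² \ φ̂` that contains `B(0, ε)`. A bounded component
lies in the closed convex hull of `φ̂`, so `diam U ≤ Δ(φ)`. On the other hand the second summand
of `ℓ` moves by at most `L/(bλ)`, so `G` inherits from `φ` pairs of points at distance close to
`λ⁻¹(Δ(φ) - L/(bλ))`, which exceeds `Δ(φ)` exactly when `bλ > L/(Δ(φ)(1-λ))`. Hence `G` leaves `U`,
so it meets `φ̂`: `G(s) = φ(t)`, that is `x = ℓ(s) + λ φ(t)`.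
-/

open scoped Pointwise
open Set Metric Bornology

theorem inter_nonempty_of_diam_connectedComponentIn_lt {X : Type*} [PseudoMetricSpace X]
    {C K : Set X} {x₀ y a c : X} (hC : IsPreconnected C) (hyC : y ∈ C)
    (hy : y ∈ connectedComponentIn Kᶜ x₀)
    (hbd : IsBounded (connectedComponentIn Kᶜ x₀)) (ha : a ∈ C) (hc : c ∈ C)
    (hac : diam (connectedComponentIn Kᶜ x₀) < dist a c) : (C ∩ K).Nonempty := by
  by_contra hCK
  have hCU : C ⊆ connectedComponentIn Kᶜ x₀ := by
    rw [connectedComponentIn_eq hy]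
    exact hC.subset_connectedComponentIn hyC fun z hz hzK => hCK ⟨z, hz, hzK⟩
  exact hac.not_ge (dist_le_diam_of_mem hbd (hCU ha) (hCU hc))

section ConnectedComponent

variable {E : Type*} [NormedAddCommGroup E] [NormedSpace ℝ E]

/-- A point outside the closed convex hull of `S` is separated from it by an open half-space,
which misses `S`, is connected and is unbounded. -/
theorem connectedComponentIn_compl_subset_closure_convexHull {S : Set E} {x₀ : E}
    (hS : S.Nonempty) (hbd : IsBounded (connectedComponentIn Sᶜ x₀)) :
    connectedComponentIn Sᶜ x₀ ⊆ closure (convexHull ℝ S) := by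
  intro x hx
  by_contra hxS
  obtain ⟨f, u, hfS, hfx⟩ := geometric_hahn_banach_closed_point
    (convex_convexHull ℝ S).closure isClosed_closure hxS
  have hfS' : ∀ a ∈ S, f a < u := fun a ha => hfS a (subset_closure (subset_convexHull ℝ S ha))
  have hH : {y | u < f y} ⊆ connectedComponentIn Sᶜ x₀ := by
    rw [connectedComponentIn_eq hx]
    refine (convex_halfSpace_gt f.toLinearMap.isLinear u).isPreconnected.subset_connectedComponentIn
      hfx fun y hy hyS => (hfS' y hyS).not_gt hy
  obtain ⟨a, ha⟩ := hS
  have hw : f (x - a) ≠ 0 := by rw [map_sub]; linarith [hfS' a ha]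
  have hIoi : Ioi u ⊆ f '' {y | u < f y} := by
    intro r hr
    have hfr : f ((r / f (x - a)) • (x - a)) = r := by
      rw [map_smul, smul_eq_mul, div_mul_cancel₀ r hw]
    exact ⟨_, show u < _ by rwa [hfr], hfr⟩
  exact not_bddAbove_Ioi u ((f.lipschitz.isBounded_image (hbd.subset hH)).subset hIoi).bddAbove

theorem diam_connectedComponentIn_compl_le {S : Set E} {x₀ : E} (hS : S.Nonempty)
    (hSb : IsBounded S) (hbd : IsBounded (connectedComponentIn Sᶜ x₀)) :
    diam (connectedComponentIn Sᶜ x₀) ≤ diam S :=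
  calc diam (connectedComponentIn Sᶜ x₀) ≤ diam (closure (convexHull ℝ S)) :=
        diam_mono (connectedComponentIn_compl_subset_closure_convexHull hS hbd)
          (isBounded_convexHull.2 hSb).closure
    _ = diam S := by rw [diam_closure, convexHull_diam]

theorem ball_subset_connectedComponentIn {F : Set E} {x : E} {ε : ℝ} (hε : 0 < ε)
    (h : ball x ε ⊆ F) : ball x ε ⊆ connectedComponentIn F x :=
  (convex_ball x ε).isPreconnected.subset_connectedComponentIn (mem_ball_self hε) h

theorem two_mul_le_diam_of_ball_subset_compl [Nontrivial E] {S : Set E} {x₀ : E} {ε : ℝ}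
    (hS : S.Nonempty) (hSb : IsBounded S) (hbd : IsBounded (connectedComponentIn Sᶜ x₀))
    (hε : 0 < ε) (hball : ball x₀ ε ⊆ Sᶜ) : 2 * ε ≤ diam S :=
  calc 2 * ε = diam (ball x₀ ε) := (diam_ball_eq x₀ hε.le).symm
    _ ≤ diam (connectedComponentIn Sᶜ x₀) :=
      diam_mono (ball_subset_connectedComponentIn hε hball) hbd
    _ ≤ diam S := diam_connectedComponentIn_compl_le hS hSb hbd

theorem image_add_ball_subset_biUnion_singleton_add_smul {ℓ : ℝ → E} {I : Set ℝ} {K : Set E}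
    {ε lam : ℝ} (hI : IsPreconnected I) (hℓ : ContinuousOn ℓ I) (hlam : 0 < lam)
    (hball : ball 0 ε ⊆ Kᶜ) (hbd : IsBounded (connectedComponentIn Kᶜ 0))
    (hfar : ∃ s₁ ∈ I, ∃ s₂ ∈ I, lam * diam (connectedComponentIn Kᶜ 0) < dist (ℓ s₁) (ℓ s₂)) :
    ℓ '' I + ball 0 (ε * lam) ⊆ ⋃ s ∈ I, ({ℓ s} + lam • K) := by
  rintro _ ⟨_, ⟨s₀, hs₀, rfl⟩, v, hv, rfl⟩
  obtain ⟨s₁, hs₁, s₂, hs₂, hs₁₂⟩ := hfar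
  set G : ℝ → E := fun s => lam⁻¹ • (ℓ s₀ + v - ℓ s)
  have hGs₀ : G s₀ ∈ ball 0 ε := by
    rw [mem_ball_zero_iff] at hv ⊢
    rw [show G s₀ = lam⁻¹ • v by simp [G], norm_smul, Real.norm_of_nonneg (by positivity),
      inv_mul_lt_iff₀ hlam, mul_comm]
    exact hv
  have hGdist : dist (G s₁) (G s₂) = lam⁻¹ * dist (ℓ s₁) (ℓ s₂) := by
    rw [dist_eq_norm, dist_eq_norm, ← smul_sub, norm_smul, Real.norm_of_nonneg (by positivity),
      sub_sub_sub_cancel_left, norm_sub_rev]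
  obtain ⟨_, ⟨s, hs, rfl⟩, hsK⟩ := inter_nonempty_of_diam_connectedComponentIn_lt
    (hI.image G ((continuousOn_const.sub hℓ).const_smul lam⁻¹)) (mem_image_of_mem G hs₀)
    (ball_subset_connectedComponentIn (pos_of_mem_ball hGs₀) hball hGs₀) hbd
    (mem_image_of_mem G hs₁) (mem_image_of_mem G hs₂)
    (by rwa [hGdist, lt_inv_mul_iff₀ hlam])
  refine mem_biUnion hs ⟨ℓ s, rfl, lam • G s, smul_mem_smul_set hsK, ?_⟩
  simp only [G, smul_inv_smul₀ hlam.ne', add_sub_cancel]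

end ConnectedComponent

theorem Function.Periodic.exists_lt_dist_of_lt_diam_range {X : Type*} [PseudoMetricSpace X]
    {φ : ℝ → X} {c r : ℝ} (hper : Function.Periodic φ c) (hc : 0 < c)
    (hr : r < diam (range φ)) : ∃ s₁ ∈ Ico 0 c, ∃ s₂ ∈ Ico 0 c, r < dist (φ s₁) (φ s₂) := by
  by_contra! h
  have h0 : (0 : ℝ) ∈ Ico 0 c := ⟨le_rfl, hc⟩
  refine hr.not_ge (diam_le_of_forall_dist_le (dist_nonneg.trans (h 0 h0 0 h0)) ?_)
  rintro _ ⟨p, rfl⟩ _ ⟨q, rfl⟩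
  obtain ⟨p', hp', hp⟩ := hper.exists_mem_Ico₀ hc p
  obtain ⟨q', hq', hq⟩ := hper.exists_mem_Ico₀ hc q
  rw [hp, hq]
  exact h p' hp' q' hq'

theorem sub_mul_dist_le_dist_add_smul_sub {E : Type*} [SeminormedAddCommGroup E]
    [NormedSpace ℝ E] (x y p q r : E) {c : ℝ} (hc : 0 ≤ c) :
    dist x y - c * dist p q ≤ dist (x + c • (p - r)) (y + c • (q - r)) := by
  have h : x + c • (p - r) - (y + c • (q - r)) = (x - y) + c • (p - q) := by module
  have := norm_sub_le ((x - y) + c • (p - q)) (c • (p - q))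
  rw [add_sub_cancel_right, norm_smul, Real.norm_of_nonneg hc] at this
  rw [dist_eq_norm, dist_eq_norm, dist_eq_norm, h]
  linarith

theorem dist_comp_add_div_le_of_abs_sub_le_one {E : Type*} [SeminormedAddCommGroup E]
    {φ : ℝ → E} {L β b s₁ s₂ : ℝ} (hLip : ∀ x y : ℝ, ‖φ x - φ y‖ ≤ L * |x - y|) (hb : 0 < b)
    (hs : |s₁ - s₂| ≤ 1) : dist (φ (β + s₁ / b)) (φ (β + s₂ / b)) ≤ L / b := by
  have hL : 0 ≤ L := by simpa using (norm_nonneg _).trans (hLip 1 0)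
  calc dist (φ (β + s₁ / b)) (φ (β + s₂ / b)) ≤ L * |(β + s₁ / b) - (β + s₂ / b)| :=
        (dist_eq_norm _ _).trans_le (hLip _ _)
    _ = L * |s₁ - s₂| / b := by
      rw [add_sub_add_left_eq_sub, ← sub_div, abs_div, abs_of_pos hb, mul_div_assoc]
    _ ≤ L / b := by gcongr; exact mul_le_of_le_one_right hL hs

theorem mul_add_inv_mul_div_lt_of_div_lt_mul {Δ L lam b : ℝ} (hΔ : 0 < Δ) (hlam0 : 0 < lam)
    (hlam1 : lam < 1) (hb : 0 < b) (h : L / (Δ * (1 - lam)) < b * lam) :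
    lam * Δ + lam⁻¹ * (L / b) < Δ := by
  rw [div_lt_iff₀ (by nlinarith)] at h
  rw [← lt_sub_iff_add_lt', inv_mul_lt_iff₀ hlam0, div_lt_iff₀ hb]
  nlinarith

theorem stmt5_general (φ : ℝ → EuclideanSpace ℝ (Fin 2)) (L ε : ℝ)
    (hper : ∀ x : ℝ, φ (x + 1) = φ x)
    (hLip : ∀ x y : ℝ, ‖φ x - φ y‖ ≤ L * |x - y|)
    (hball : Metric.ball (0 : EuclideanSpace ℝ (Fin 2)) ε ⊆ (Set.range φ)ᶜ)
    (hbd : Bornology.IsBounded (connectedComponentIn (Set.range φ)ᶜ 0))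
    (β : ℝ)
    (b : ℕ) (lam : ℝ) (hlam0 : 0 < lam) (hlam1 : lam < 1)
    (hcond : (b : ℝ) * lam > L / (Metric.diam (Set.range φ) * (1 - lam)))
    (ℓ : ℝ → EuclideanSpace ℝ (Fin 2))
    (hℓ : ∀ s : ℝ, ℓ s = φ s + lam⁻¹ • (φ (β + s / (b : ℝ)) - φ β)) :
    (ℓ '' Set.Ico (0 : ℝ) 1) + Metric.ball (0 : EuclideanSpace ℝ (Fin 2)) (ε * lam) ⊆
      ⋃ s ∈ Set.Ico (0 : ℝ) 1, ({ℓ s} + lam • Set.range φ) := by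
  intro x hx
  have hε : 0 < ε := by
    obtain ⟨_, -, v, hv, -⟩ := hx
    exact pos_of_mul_pos_left (pos_of_mem_ball hv) hlam0.le
  have hcont : Continuous φ := (LipschitzWith.of_dist_le' (K := L) fun x y => by
    simpa only [dist_eq_norm, Real.norm_eq_abs] using hLip x y).continuous
  have hK := Function.Periodic.isBounded_of_continuous hper one_ne_zero hcont
  have hΔ : 0 < diam (range φ) := (by positivity : 0 < 2 * ε).trans_le
    (two_mul_le_diam_of_ball_subset_compl (range_nonempty φ) hK hbd hε hball)
  have hb : 0 < (b : ℝ) := by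
    have hL : 0 ≤ L := by simpa using (norm_nonneg _).trans (hLip 1 0)
    exact pos_of_mul_pos_left
      ((div_nonneg hL (mul_nonneg diam_nonneg (by linarith))).trans_lt hcond) hlam0.le
  obtain ⟨s₁, hs₁, s₂, hs₂, hfar⟩ := Function.Periodic.exists_lt_dist_of_lt_diam_range hper
    one_pos (mul_add_inv_mul_div_lt_of_div_lt_mul hΔ hlam0 hlam1 hb hcond)
  have hLb := dist_comp_add_div_le_of_abs_sub_le_one (β := β) (s₁ := s₁) (s₂ := s₂) hLip hb
    (abs_sub_le_iff.2 ⟨by linarith [hs₁.2, hs₂.1], by linarith [hs₁.1, hs₂.2]⟩)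
  obtain rfl : ℓ = _ := funext hℓ
  refine image_add_ball_subset_biUnion_singleton_add_smul isPreconnected_Ico (by fun_prop) hlam0
    hball hbd ⟨s₁, hs₁, s₂, hs₂, ?_⟩ hx
  calc lam * diam (connectedComponentIn (range φ)ᶜ 0) ≤ lam * diam (range φ) := by
        gcongr; exact diam_connectedComponentIn_compl_le (range_nonempty φ) hK hbd
    _ < dist (φ s₁) (φ s₂) - lam⁻¹ * (L / b) := by linarith
    _ ≤ dist (φ s₁) (φ s₂) - lam⁻¹ * dist (φ (β + s₁ / b)) (φ (β + s₂ / b)) := by gcongr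
    _ ≤ _ := sub_mul_dist_le_dist_add_smul_sub _ _ _ _ _ (by positivity)

/-- Under the separation condition and `bλ > L/(Δ(φ)(1−λ))`,
`ℓ̂_β + B(0,ελ) ⊆ ⋃_{s∈[0,1)} (ℓ_β(s) + λ·φ̂)`, where
`ℓ_β(s) = φ(s) + λ⁻¹(φ(β+s/b) − φ(β))`. -/
theorem stmt5 (φ : ℝ → EuclideanSpace ℝ (Fin 2)) (L ε : ℝ) (hε : 0 < ε)
    (hper : ∀ x : ℝ, φ (x + 1) = φ x)
    (hLip : ∀ x y : ℝ, ‖φ x - φ y‖ ≤ L * |x - y|)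
    (hball : Metric.ball (0 : EuclideanSpace ℝ (Fin 2)) ε ⊆ (Set.range φ)ᶜ)
    (hbd : Bornology.IsBounded (connectedComponentIn (Set.range φ)ᶜ 0))
    (β : ℝ) (hβ : β ∈ Set.Ico (0 : ℝ) 1)
    (b : ℕ) (hb : 2 ≤ b) (lam : ℝ) (hlam0 : 0 < lam) (hlam1 : lam < 1)
    (hcond : (b : ℝ) * lam > L / (Metric.diam (Set.range φ) * (1 - lam)))
    (ℓ : ℝ → EuclideanSpace ℝ (Fin 2))
    (hℓ : ∀ s : ℝ, ℓ s = φ s + lam⁻¹ • (φ (β + s / (b : ℝ)) - φ β)) :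
    (ℓ '' Set.Ico (0 : ℝ) 1) + Metric.ball (0 : EuclideanSpace ℝ (Fin 2)) (ε * lam) ⊆
      ⋃ s ∈ Set.Ico (0 : ℝ) 1, ({ℓ s} + lam • Set.range φ) :=
  stmt5_general φ L ε hper hLip hball hbd β b lam hlam0 hlam1 hcond ℓ hℓ
end

section
/- For L, ε > 0, the equation c = (L/ε)(2 + 1/(c−1)) has a unique solution c₀ in (1, ∞), and if moreover bλ³ > c₀ with λ ∈ (0,1), b ≥ 2 and γ := 1/(bλ) < 1, then ελ² > L(1/b + γ/(1−γ)). -/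
/-! The map `f c = k (2 + 1/(c-1))` is antitone on `(1, ∞)`, so it has at most one fixed point
there, and the larger root of `c² - (1 + 2k) c + k` is one. For the inequality put `t = bλ`:
then `γ/(1-γ) = 1/(t-1)` and `1/b ≤ 1/t`, while `1/t + 1/(t-1) = f t / t`. Since
`c < bλ³ ≤ t`, antitonicity gives `f t ≤ f c = c < t λ²`. -/

lemma AntitoneOn.eq_of_isFixedPt {α : Type*} [LinearOrder α] {f : α → α} {s : Set α}
    (hf : AntitoneOn f s) {x y : α} (hx : x ∈ s) (hy : y ∈ s)
    (hfx : Function.IsFixedPt f x) (hfy : Function.IsFixedPt f y) : x = y := by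
  rcases le_total x y with h | h
  · exact le_antisymm h (hfy.eq ▸ hfx.eq ▸ hf hx hy h)
  · exact le_antisymm (hfx.eq ▸ hfy.eq ▸ hf hy hx h) h

lemma antitoneOn_mul_two_add_one_div_sub_one {k : ℝ} (hk : 0 ≤ k) :
    AntitoneOn (fun c : ℝ => k * (2 + 1 / (c - 1))) (Set.Ioi 1) := by
  intro s hs t _ hst
  have : 0 < s - 1 := sub_pos.2 hs
  dsimp only
  gcongr

lemma eq_mul_two_add_one_div_sub_one_iff {k c : ℝ} (hc : 1 < c) :
    c = k * (2 + 1 / (c - 1)) ↔ c * (c - 1) = k * (2 * c - 1) := by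
  have : c - 1 ≠ 0 := sub_ne_zero.2 hc.ne'
  constructor <;> intro h
  · field_simp at h; linear_combination h
  · field_simp; linear_combination h

lemma exists_eq_mul_two_add_one_div_sub_one {k : ℝ} (hk : 0 < k) :
    ∃ c, 1 < c ∧ c = k * (2 + 1 / (c - 1)) := by
  -- the root `(1 + 2k + √(4k² + 1)) / 2` of `c² - (1 + 2k) c + k`
  set s := √(4 * k ^ 2 + 1)
  have hs : s ^ 2 = 4 * k ^ 2 + 1 := Real.sq_sqrt (by positivity)
  have hs1 : 1 < s := by nlinarith [Real.sqrt_nonneg (4 * k ^ 2 + 1)]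
  have hc : 1 < (1 + 2 * k + s) / 2 := by linarith
  refine ⟨_, hc, (eq_mul_two_add_one_div_sub_one_iff hc).2 ?_⟩
  linear_combination hs / 4

lemma mul_one_div_add_one_div_div_one_sub_lt_sq {k c B lam : ℝ} (hk : 0 ≤ k) (hc : 1 < c)
    (hfix : c = k * (2 + 1 / (c - 1))) (hlam0 : 0 < lam) (hlam1 : lam < 1)
    (ht : 1 < B * lam) (hcB : c < B * lam ^ 3) :
    k * (1 / B + 1 / (B * lam) / (1 - 1 / (B * lam))) < lam ^ 2 := by
  set t := B * lam
  have ht0 : 0 < t := by linarith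
  have htB : t ≤ B := mul_le_of_le_one_right (pos_of_mul_pos_left ht0 hlam0.le).le hlam1.le
  have hct : c ≤ t := by nlinarith [pow_le_one₀ hlam0.le hlam1.le (n := 2)]
  have ht1 : t - 1 ≠ 0 := sub_ne_zero.2 ht.ne'
  calc k * (1 / B + 1 / t / (1 - 1 / t))
      ≤ k * (1 / t + 1 / (t - 1)) := by
        have : 1 / t / (1 - 1 / t) = 1 / (t - 1) := by field_simp
        rw [this]
        gcongr
    _ = k * (2 + 1 / (t - 1)) / t := by field_simp; ring
    _ ≤ c / t := by
        gcongr
        exact (antitoneOn_mul_two_add_one_div_sub_one hk (Set.mem_Ioi.2 hc)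
          (Set.mem_Ioi.2 ht) hct).trans_eq hfix.symm
    _ < lam ^ 2 := by rw [div_lt_iff₀ ht0]; linarith

/-- For `L, ε > 0`, the equation `c = (L/ε)(2 + 1/(c−1))` has a unique
solution `c₀` in `(1,∞)`; and if `bλ³ > c₀` with `λ ∈ (0,1)`, `b ≥ 2` and
`γ := 1/(bλ) < 1`, then `ελ² > L(1/b + γ/(1−γ))`. -/
theorem stmt7 (L ε : ℝ) (hL : 0 < L) (hε : 0 < ε) :
    (∃! c : ℝ, 1 < c ∧ c = (L / ε) * (2 + 1 / (c - 1))) ∧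
      (∀ c : ℝ, 1 < c → c = (L / ε) * (2 + 1 / (c - 1)) →
        ∀ (b : ℕ) (lam : ℝ), 2 ≤ b → 0 < lam → lam < 1 →
          1 / ((b : ℝ) * lam) < 1 → (b : ℝ) * lam ^ 3 > c →
            ε * lam ^ 2 >
              L * (1 / (b : ℝ) +
                (1 / ((b : ℝ) * lam)) / (1 - 1 / ((b : ℝ) * lam)))) := by
  have hk : 0 < L / ε := div_pos hL hε
  refine ⟨?_, ?_⟩
  · obtain ⟨c, hc, hfix⟩ := exists_eq_mul_two_add_one_div_sub_one hk
    refine ⟨c, ⟨hc, hfix⟩, fun c' ⟨hc', hfix'⟩ => ?_⟩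
    exact (antitoneOn_mul_two_add_one_div_sub_one hk.le).eq_of_isFixedPt hc' hc
      hfix'.symm hfix.symm
  · intro c hc hfix b lam hb hlam0 hlam1 hγ hbc
    have hb0 : (0 : ℝ) < b := by exact_mod_cast (by omega : 0 < b)
    have ht : 1 < (b : ℝ) * lam := (div_lt_one (by positivity)).1 hγ
    have key := mul_one_div_add_one_div_div_one_sub_lt_sq hk.le hc hfix hlam0 hlam1 ht hbc
    rw [div_mul_eq_mul_div, div_lt_iff₀' hε] at key
    exact key
end

section
/- Let A ⊆ ℝ³ and suppose there exist constants C > 0, s ∈ (0,3) and n₀ such that for all n ≥ n₀, the number N(A, 𝓛ₙ) of b-adic cubes of side b^{−n} meeting A satisfies N(A, 𝓛ₙ) ≥ C·b^{sn}. Then the lower box dimension of A is at least s. In particular, if for each of the b^n intervals [k/b^n,(k+1)/b^n) the image set {W(s) : s ∈ [k/b^n,(k+1)/b^n)} ⊆ ℝ² contains a disc of radius ελ^{n+1}, then the graph of W has lower box dimension at least 3 + 2 log_b λ. -/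
/-!
If `N(A, 𝓛ₙ) ≥ C b^{sn}`, then `log N(A, 𝓛ₙ) / (n log b) ≥ s + O(1/n)`. A liminf in `ℝ` is a junk
value unless the ratios are also bounded above; they are, because a single finite count
`N(A, 𝓛ₙ₀)` already makes `A` bounded, so `N(A, 𝓛ₙ) = O(b^{3n})`.

For the graph, the column over `[k/b^n, (k+1)/b^n)` is met by `W` along a disc of radius
`r = ελ^{n+1}`; the disc contains a square of `(r b^n - 1)^2` points of the lattice `b^{-n} ℤ²`,
and each of them is `W x` for some `x` in that interval, giving a cube of the graph. Summing over
the `b^n` columns, `N ≳ (ε λ / 2)^2 (λ^2 b^3)^n = (ε λ / 2)^2 b^{(3 + 2 log_b λ) n}`.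
-/

/-- Number of generation-`n` `b`-adic cubes of `ℝ³` meeting `A`. -/
noncomputable def boxCount (b n : ℕ) (A : Set (Fin 3 → ℝ)) : ℕ :=
  Set.ncard {k : Fin 3 → ℤ | ∃ p ∈ A, ∀ i : Fin 3,
    (k i : ℝ) / (b : ℝ) ^ n ≤ p i ∧ p i < ((k i : ℝ) + 1) / (b : ℝ) ^ n}

/-- Lower box dimension of `A ⊆ ℝ³` via `b`-adic cube counting. -/
noncomputable def lowerBoxDim (b : ℕ) (A : Set (Fin 3 → ℝ)) : ℝ :=
  Filter.liminf (fun n : ℕ => Real.log (boxCount b n A) / (n * Real.log b)) Filter.atTop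

open Set Filter Topology Real

section Analysis

variable {β : ℝ}

lemma tendsto_log_mul_rpow_div (hβ : 1 < β) {C : ℝ} (hC : 0 < C) (s : ℝ) :
    Tendsto (fun n : ℕ => log (C * β ^ (s * n)) / (n * log β)) atTop (𝓝 s) := by
  have hlogβ : 0 < log β := log_pos hβ
  have hlim : Tendsto (fun n : ℕ => log C / (n * log β) + s) atTop (𝓝 (0 + s)) :=
    (tendsto_const_nhds.div_atTop
      (tendsto_natCast_atTop_atTop.atTop_mul_const hlogβ)).add tendsto_const_nhds
  rw [zero_add] at hlim
  refine hlim.congr' ((eventually_ge_atTop 1).mono fun n hn => ?_)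
  have hn : (0 : ℝ) < n := by exact_mod_cast hn
  dsimp only
  rw [log_mul hC.ne' (rpow_pos_of_pos (by linarith) _).ne', log_rpow (by linarith)]
  field_simp

lemma le_liminf_log_div_of_rpow_bounds {N : ℕ → ℝ} {C D s t : ℝ} (hβ : 1 < β) (hC : 0 < C)
    (hD : 0 < D)
    (hlow : ∀ᶠ n : ℕ in atTop, C * β ^ (s * n) ≤ N n)
    (hup : ∀ᶠ n : ℕ in atTop, N n ≤ D * β ^ (t * n)) :
    s ≤ liminf (fun n : ℕ => log (N n) / (n * log β)) atTop := by
  have hlogβ : 0 < log β := log_pos hβ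
  have hsandwich : ∀ᶠ n : ℕ in atTop,
      log (C * β ^ (s * n)) / (n * log β) ≤ log (N n) / (n * log β) ∧
        log (N n) / (n * log β) ≤ log (D * β ^ (t * n)) / (n * log β) := by
    filter_upwards [hlow, hup, eventually_ge_atTop 1] with n hl hu hn
    have hden : (0 : ℝ) < n * log β := mul_pos (by exact_mod_cast hn) hlogβ
    have hpos : 0 < C * β ^ (s * n) := mul_pos hC (rpow_pos_of_pos (by linarith) _)
    exact ⟨div_le_div_of_nonneg_right (log_le_log hpos hl) hden.le,
      div_le_div_of_nonneg_right (log_le_log (hpos.trans_le hl) hu) hden.le⟩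
  have hcobdd : IsCoboundedUnder (· ≥ ·) atTop fun n : ℕ => log (N n) / (n * log β) :=
    ((tendsto_log_mul_rpow_div hβ hD t).isBoundedUnder_le.mono_le
      (hsandwich.mono fun _ h => h.2)).isCoboundedUnder_ge
  calc s = liminf (fun n : ℕ => log (C * β ^ (s * n)) / (n * log β)) atTop :=
        (tendsto_log_mul_rpow_div hβ hC s).liminf_eq.symm
    _ ≤ _ := liminf_le_liminf (hsandwich.mono fun _ h => h.1)
        (tendsto_log_mul_rpow_div hβ hC s).isBoundedUnder_ge hcobdd

end Analysis

lemma sub_sub_one_le_card_Icc_ceil_floor (x y : ℝ) :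
    y - x - 1 ≤ ((Finset.Icc ⌈x⌉ ⌊y⌋).card : ℝ) := by
  have h : ((⌊y⌋ + 1 - ⌈x⌉ : ℤ) : ℝ) ≤ (((⌊y⌋ + 1 - ⌈x⌉).toNat : ℤ) : ℝ) := by
    exact_mod_cast Int.self_le_toNat _
  rw [Int.card_Icc]
  push_cast at h
  linarith [Int.sub_one_lt_floor y, Int.ceil_lt_add_one x]

lemma card_Icc_floor_floor_le {x y : ℝ} (hxy : x ≤ y) :
    ((Finset.Icc ⌊x⌋ ⌊y⌋).card : ℝ) ≤ y - x + 2 := by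
  have h : (((⌊y⌋ + 1 - ⌊x⌋).toNat : ℤ) : ℝ) = ((⌊y⌋ + 1 - ⌊x⌋ : ℤ) : ℝ) := by
    rw [Int.toNat_of_nonneg (by linarith [Int.floor_mono hxy])]
  rw [Int.card_Icc]
  push_cast at h
  rw [h]
  linarith [Int.floor_le y, Int.lt_floor_add_one x]

section CubeIndex

variable {ι : Type*} {b n : ℕ}

noncomputable def cubeIndex (b n : ℕ) (p : ι → ℝ) : ι → ℤ := fun i => ⌊p i * (b : ℝ) ^ n⌋

lemma boxCount_eq_ncard_image_cubeIndex (hb : 0 < b) (A : Set (Fin 3 → ℝ)) :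
    boxCount b n A = (cubeIndex b n '' A).ncard := by
  have hβ : (0 : ℝ) < (b : ℝ) ^ n := by positivity
  unfold boxCount
  congr 1
  ext k
  simp only [mem_ofPred_eq, mem_image, funext_iff, cubeIndex, Int.floor_eq_iff,
    div_le_iff₀ hβ, lt_div_iff₀ hβ]

lemma isBounded_of_finite_image_cubeIndex [Fintype ι] (hb : 0 < b) {A : Set (ι → ℝ)}
    (hfin : (cubeIndex b n '' A).Finite) : Bornology.IsBounded A := by
  have hβ : (0 : ℝ) < (b : ℝ) ^ n := by positivity
  refine ((Bornology.isBounded_biUnion hfin).2 fun k _ => Metric.isBounded_Icc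
    (fun i => (k i : ℝ) / (b : ℝ) ^ n) (fun i => ((k i : ℝ) + 1) / (b : ℝ) ^ n)).subset ?_
  intro p hp
  refine mem_biUnion (mem_image_of_mem _ hp) ⟨fun i => ?_, fun i => ?_⟩
  · exact (div_le_iff₀ hβ).2 (Int.floor_le _)
  · exact ((lt_div_iff₀ hβ).2 (Int.lt_floor_add_one _)).le

lemma image_cubeIndex_subset_piFinset [Fintype ι] [DecidableEq ι] {A : Set (ι → ℝ)} {R : ℝ}
    (hR : ∀ p ∈ A, ‖p‖ ≤ R) :
    cubeIndex b n '' A ⊆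
      Fintype.piFinset fun _ : ι => Finset.Icc ⌊-R * (b : ℝ) ^ n⌋ ⌊R * (b : ℝ) ^ n⌋ := by
  rintro _ ⟨p, hp, rfl⟩
  simp only [Finset.mem_coe, Fintype.mem_piFinset, Finset.mem_Icc]
  intro i
  have hpi : |p i| ≤ R := (norm_le_pi_norm p i).trans (hR p hp)
  have hβ : (0 : ℝ) ≤ (b : ℝ) ^ n := by positivity
  exact ⟨Int.floor_mono (by nlinarith [neg_abs_le (p i)]),
    Int.floor_mono (by nlinarith [le_abs_self (p i)])⟩

lemma finite_image_cubeIndex [Fintype ι] {A : Set (ι → ℝ)} (hA : Bornology.IsBounded A) :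
    (cubeIndex b n '' A).Finite := by
  classical
  obtain ⟨R, hR⟩ := isBounded_iff_forall_norm_le.1 hA
  exact (Finset.finite_toSet _).subset (image_cubeIndex_subset_piFinset hR)

lemma ncard_image_cubeIndex_le [Fintype ι] (hb : 0 < b) {A : Set (ι → ℝ)} {R : ℝ} (hR0 : 0 ≤ R)
    (hR : ∀ p ∈ A, ‖p‖ ≤ R) :
    ((cubeIndex b n '' A).ncard : ℝ) ≤ ((2 * R + 2) * (b : ℝ) ^ n) ^ Fintype.card ι := by
  classical
  have hβ : (1 : ℝ) ≤ (b : ℝ) ^ n := one_le_pow₀ (by exact_mod_cast hb)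
  have hcard := Set.ncard_le_ncard (image_cubeIndex_subset_piFinset (b := b) (n := n) hR)
    (Finset.finite_toSet _)
  rw [Set.ncard_coe_finset, Fintype.card_piFinset, Finset.prod_const, Finset.card_univ] at hcard
  calc ((cubeIndex b n '' A).ncard : ℝ)
      ≤ ((Finset.Icc ⌊-R * (b : ℝ) ^ n⌋ ⌊R * (b : ℝ) ^ n⌋).card : ℝ) ^ Fintype.card ι := by
        exact_mod_cast hcard
    _ ≤ ((2 * R + 2) * (b : ℝ) ^ n) ^ Fintype.card ι := by
        gcongr
        refine (card_Icc_floor_floor_le (by nlinarith)).trans ?_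
        nlinarith

end CubeIndex

lemma le_lowerBoxDim_of_le_boxCount {b n₀ : ℕ} (hb : 2 ≤ b) {A : Set (Fin 3 → ℝ)} {C s : ℝ}
    (hC : 0 < C) (h : ∀ n : ℕ, n₀ ≤ n → C * (b : ℝ) ^ (s * n) ≤ (boxCount b n A : ℝ)) :
    s ≤ lowerBoxDim b A := by
  have hb0 : 0 < b := by omega
  have hb1 : (1 : ℝ) < b := by exact_mod_cast hb
  have hfin : (cubeIndex b n₀ '' A).Finite := by
    refine Set.finite_of_ncard_pos ?_
    rw [← boxCount_eq_ncard_image_cubeIndex hb0]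
    exact_mod_cast (mul_pos hC (rpow_pos_of_pos (by linarith) _)).trans_le (h n₀ le_rfl)
  obtain ⟨R, hR⟩ :=
    isBounded_iff_forall_norm_le.1 (isBounded_of_finite_image_cubeIndex hb0 hfin)
  have hR' : ∀ p ∈ A, ‖p‖ ≤ max R 0 := fun p hp => (hR p hp).trans (le_max_left _ _)
  refine le_liminf_log_div_of_rpow_bounds (t := 3) hb1 hC
    (pow_pos (by positivity : 0 < 2 * max R 0 + 2) 3) (eventually_atTop.2 ⟨n₀, h⟩)
    (Eventually.of_forall fun n => ?_)
  have hcount := ncard_image_cubeIndex_le (n := n) hb0 (le_max_right _ _) hR'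
  rw [Fintype.card_fin, mul_pow] at hcount
  rw [boxCount_eq_ncard_image_cubeIndex hb0, mul_comm (3 : ℝ), rpow_mul (by linarith),
    rpow_natCast]
  exact_mod_cast hcount

section Lattice

variable {β c ρ : ℝ}

noncomputable def latticePoints (β c ρ : ℝ) : Finset ℤ := Finset.Icc ⌈(c - ρ) * β⌉ ⌊(c + ρ) * β⌋

lemma abs_div_sub_le_of_mem_latticePoints (hβ : 0 < β) {j : ℤ} (hj : j ∈ latticePoints β c ρ) :
    |j / β - c| ≤ ρ := by
  rw [latticePoints, Finset.mem_Icc, Int.ceil_le, Int.le_floor, ← div_le_iff₀ hβ,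
    ← le_div_iff₀ hβ] at hj
  exact abs_le.2 ⟨by linarith [hj.1], by linarith [hj.2]⟩

lemma two_mul_mul_sub_one_le_card_latticePoints (β c ρ : ℝ) :
    2 * ρ * β - 1 ≤ ((latticePoints β c ρ).card : ℝ) :=
  le_of_eq_of_le (by ring) (sub_sub_one_le_card_Icc_ceil_floor _ _)

lemma mem_ball_of_mem_latticePoints (hβ : 0 < β) {r : ℝ} (hr : 0 < r)
    {z : EuclideanSpace ℝ (Fin 2)} {j₁ j₂ : ℤ} (h₁ : j₁ ∈ latticePoints β (z 0) (r / 2))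
    (h₂ : j₂ ∈ latticePoints β (z 1) (r / 2)) :
    !₂[j₁ / β, j₂ / β] ∈ Metric.ball z r := by
  have e₁ := abs_div_sub_le_of_mem_latticePoints hβ h₁
  have e₂ := abs_div_sub_le_of_mem_latticePoints hβ h₂
  rw [Metric.mem_ball, EuclideanSpace.dist_eq, Fin.sum_univ_two, sqrt_lt' hr]
  simp only [Real.dist_eq, Matrix.cons_val_zero, Matrix.cons_val_one]
  nlinarith [pow_le_pow_left₀ (abs_nonneg _) e₁ 2, pow_le_pow_left₀ (abs_nonneg _) e₂ 2]

end Lattice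

section Graph

variable {W : ℝ → EuclideanSpace ℝ (Fin 2)} {b n : ℕ}

def unitGraph (W : ℝ → EuclideanSpace ℝ (Fin 2)) : Set (Fin 3 → ℝ) :=
  {p | ∃ x ∈ Set.Icc (0 : ℝ) 1, p = ![x, W x 0, W x 1]}

lemma isBounded_unitGraph (hW : Continuous W) : Bornology.IsBounded (unitGraph W) := by
  have hgraph : unitGraph W = (fun x => ![x, W x 0, W x 1]) '' Icc 0 1 := by
    ext p
    simp only [unitGraph, mem_ofPred_eq, mem_image]
    exact exists_congr fun x => and_congr_right fun _ => eq_comm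
  rw [hgraph]
  exact (isCompact_Icc.image (by fun_prop)).isBounded

lemma mem_image_cubeIndex_unitGraph (hb : 0 < b) {k : ℕ} (hk : k < b ^ n) {r : ℝ} (hr : 0 < r)
    {z : EuclideanSpace ℝ (Fin 2)}
    (hz : Metric.ball z r ⊆ W '' Ico ((k : ℝ) / (b : ℝ) ^ n) (((k : ℝ) + 1) / (b : ℝ) ^ n))
    {j₁ j₂ : ℤ} (h₁ : j₁ ∈ latticePoints ((b : ℝ) ^ n) (z 0) (r / 2))
    (h₂ : j₂ ∈ latticePoints ((b : ℝ) ^ n) (z 1) (r / 2)) :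
    ![(k : ℤ), j₁, j₂] ∈ cubeIndex b n '' unitGraph W := by
  have hβ : (0 : ℝ) < (b : ℝ) ^ n := by positivity
  obtain ⟨x, ⟨hxk, hxk'⟩, hWx⟩ := hz (mem_ball_of_mem_latticePoints hβ hr h₁ h₂)
  have hk1 : ((k : ℝ) + 1) / (b : ℝ) ^ n ≤ 1 := by
    rw [div_le_one hβ]
    exact_mod_cast hk
  refine ⟨![x, W x 0, W x 1], ⟨x, ⟨(by positivity : (0 : ℝ) ≤ k / (b : ℝ) ^ n).trans hxk,
    by linarith⟩, rfl⟩, funext fun i => ?_⟩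
  fin_cases i
  · exact Int.floor_eq_iff.2 ⟨(div_le_iff₀ hβ).1 hxk, (lt_div_iff₀ hβ).1 hxk'⟩
  · simp [cubeIndex, hWx, hβ.ne']
  · simp [cubeIndex, hWx, hβ.ne']

lemma le_boxCount_unitGraph (hb : 0 < b) (hW : Continuous W) {r : ℝ} (hr : 0 < r)
    (hrβ : 1 ≤ r * (b : ℝ) ^ n)
    (hball : ∀ k : ℕ, k < b ^ n → ∃ z : EuclideanSpace ℝ (Fin 2),
      Metric.ball z r ⊆ W '' Ico ((k : ℝ) / (b : ℝ) ^ n) (((k : ℝ) + 1) / (b : ℝ) ^ n)) :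
    (b : ℝ) ^ n * (r * (b : ℝ) ^ n - 1) ^ 2 ≤ boxCount b n (unitGraph W) := by
  have hβ : (0 : ℝ) < (b : ℝ) ^ n := by positivity
  choose z hz using fun k : Fin (b ^ n) => hball k k.isLt
  let L : Fin (b ^ n) → Finset (ℤ × ℤ) := fun k =>
    latticePoints ((b : ℝ) ^ n) (z k 0) (r / 2) ×ˢ latticePoints ((b : ℝ) ^ n) (z k 1) (r / 2)
  have hL : ∀ k, (r * (b : ℝ) ^ n - 1) ^ 2 ≤ ((L k).card : ℝ) := fun k => by
    have h₀ := two_mul_mul_sub_one_le_card_latticePoints ((b : ℝ) ^ n) (z k 0) (r / 2)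
    have h₁ := two_mul_mul_sub_one_le_card_latticePoints ((b : ℝ) ^ n) (z k 1) (r / 2)
    rw [Finset.card_product, Nat.cast_mul, sq]
    exact mul_le_mul (by linarith) (by linarith) (by linarith) (by positivity)
  have hinj : InjOn (fun x : (_ : Fin (b ^ n)) × ℤ × ℤ => ![((x.1 : ℕ) : ℤ), x.2.1, x.2.2])
      (Finset.univ.sigma L : Set _) := by
    rintro ⟨k, j₁, j₂⟩ - ⟨k', j₁', j₂'⟩ - h
    have h₀ := congrFun h 0
    have h₁ := congrFun h 1
    have h₂ := congrFun h 2
    simp only [Matrix.cons_val_zero, Matrix.cons_val_one, Matrix.cons_val_two, Nat.cast_inj,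
      Fin.val_inj, Matrix.tail_cons, Matrix.head_cons] at h₀ h₁ h₂
    subst h₀ h₁ h₂
    rfl
  have hcount := Set.ncard_le_ncard_of_injOn _ (fun x hx => ?_) hinj
    (finite_image_cubeIndex (b := b) (n := n) (isBounded_unitGraph hW))
  · rw [Set.ncard_coe_finset, Finset.card_sigma] at hcount
    rw [boxCount_eq_ncard_image_cubeIndex hb]
    calc (b : ℝ) ^ n * (r * (b : ℝ) ^ n - 1) ^ 2
        = ∑ _k : Fin (b ^ n), (r * (b : ℝ) ^ n - 1) ^ 2 := by simp
      _ ≤ ∑ k, ((L k).card : ℝ) := Finset.sum_le_sum fun k _ => hL k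
      _ ≤ _ := by exact_mod_cast hcount
  · obtain ⟨k, j₁, j₂⟩ := x
    simp only [Finset.coe_sigma, mem_sigma_iff, Finset.mem_coe, Finset.mem_product, L] at hx
    exact mem_image_cubeIndex_unitGraph hb k.isLt hr (hz k) hx.2.1 hx.2.2

end Graph

lemma rpow_three_add_two_logb_mul {b lam : ℝ} (hb : 0 < b) (hb1 : b ≠ 1) (hlam : 0 < lam)
    (n : ℕ) : b ^ ((3 + 2 * logb b lam) * n) = (lam ^ 2 * b ^ 3) ^ n := by
  rw [rpow_mul hb.le, rpow_add hb, mul_comm 2, rpow_mul hb.le, rpow_logb hb hb1 hlam]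
  norm_cast
  ring

lemma le_lowerBoxDim_unitGraph {b : ℕ} (hb : 2 ≤ b) {lam ε : ℝ}
    {W : ℝ → EuclideanSpace ℝ (Fin 2)} (hlam : 1 / (b : ℝ) < lam) (hε : 0 < ε)
    (hW : Continuous W)
    (hball : ∀ n : ℕ, ∀ k : ℕ, k < b ^ n → ∃ z : EuclideanSpace ℝ (Fin 2),
      Metric.ball z (ε * lam ^ (n + 1)) ⊆
        W '' Ico ((k : ℝ) / (b : ℝ) ^ n) (((k : ℝ) + 1) / (b : ℝ) ^ n)) :
    3 + 2 * logb b lam ≤ lowerBoxDim b (unitGraph W) := by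
  have hb0 : (0 : ℝ) < b := by positivity
  have hb1 : (1 : ℝ) < b := by exact_mod_cast hb
  have hlam0 : 0 < lam := (by positivity : (0 : ℝ) < 1 / b).trans hlam
  have hlamb : 1 < lam * b := by rwa [div_lt_iff₀ hb0] at hlam
  -- the discs measure `ε λ^{n+1} b^n = ε λ (λ b)^n → ∞` generation-`n` cells across
  obtain ⟨N, hN⟩ := (((tendsto_pow_atTop_atTop_of_one_lt hlamb).const_mul_atTop
    (by positivity : 0 < ε * lam)).eventually_ge_atTop 2).exists_forall_of_atTop
  refine le_lowerBoxDim_of_le_boxCount hb (n₀ := N) (C := ε ^ 2 * lam ^ 2 / 4) (by positivity)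
    fun n hn => ?_
  have hrβ : 2 ≤ ε * lam ^ (n + 1) * (b : ℝ) ^ n := by
    have h := hN n hn
    rw [mul_pow] at h
    linarith [show ε * lam ^ (n + 1) * (b : ℝ) ^ n = ε * lam * (lam ^ n * (b : ℝ) ^ n) by ring]
  calc ε ^ 2 * lam ^ 2 / 4 * (b : ℝ) ^ ((3 + 2 * logb b lam) * n)
      = (b : ℝ) ^ n * (ε * lam ^ (n + 1) * (b : ℝ) ^ n / 2) ^ 2 := by
        rw [rpow_three_add_two_logb_mul hb0 hb1.ne' hlam0]
        ring
    _ ≤ (b : ℝ) ^ n * (ε * lam ^ (n + 1) * (b : ℝ) ^ n - 1) ^ 2 := by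
        gcongr
        linarith
    _ ≤ _ := le_boxCount_unitGraph (by omega) hW (by positivity) (by linarith) (hball n)

/-- If `N(A,𝓛ₙ) ≥ C·b^{sn}` for all `n ≥ n₀`, then the lower box dimension
of `A ⊆ ℝ³` is at least `s`. In particular, if over each `b`-adic interval
`[k/b^n,(k+1)/b^n)` the image of `W` contains a disc of radius `ελ^{n+1}`, then the
graph of `W` has lower box dimension at least `3 + 2 log_b λ`. -/
theorem stmt9 (b : ℕ) (hb : 2 ≤ b) :
    (∀ (A : Set (Fin 3 → ℝ)) (C s : ℝ) (n₀ : ℕ), 0 < C → 0 < s → s < 3 →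
        (∀ n : ℕ, n₀ ≤ n → C * (b : ℝ) ^ (s * n) ≤ (boxCount b n A : ℝ)) →
          s ≤ lowerBoxDim b A) ∧
      (∀ (lam ε : ℝ) (W : ℝ → EuclideanSpace ℝ (Fin 2)), 1 / (b : ℝ) < lam → lam < 1 →
        0 < ε → Continuous W →
        (∀ n : ℕ, ∀ k : ℕ, k < b ^ n → ∃ z : EuclideanSpace ℝ (Fin 2),
          Metric.ball z (ε * lam ^ (n + 1)) ⊆
            W '' Set.Ico ((k : ℝ) / (b : ℝ) ^ n) (((k : ℝ) + 1) / (b : ℝ) ^ n)) →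
        3 + 2 * Real.logb b lam ≤
          lowerBoxDim b
            {p : Fin 3 → ℝ | ∃ x ∈ Set.Icc (0 : ℝ) 1, p = ![x, W x 0, W x 1]}) :=
  ⟨fun _ _ _ _ hC _ _ h => le_lowerBoxDim_of_le_boxCount hb hC h,
    fun _ _ _ hlam _ hε hW hball => le_lowerBoxDim_unitGraph hb hlam hε hW hball⟩
end
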